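/- Let φ : (R, 𝔪) → (S, 𝔫) be a local homomorphism of commutative Noetherian local rings such that S is a finitely generated R-module and depth S = 0. Let ℓ be an integer such that (0 :_S 𝔫) is not contained in 𝔫^ℓ, and suppose 𝔪S ⊆ 𝔫^ℓ. Let J^1 → J^2 → J^3 (maps σ, τ) be a sequence of homomorphisms of injective R-modules such that the induced maps Hom_R(R/𝔪, σ) and Hom_R(R/𝔪, τ) are both zero. If the induced sequence Hom_R(S, J^1) → Hom_R(S, J^2) → Hom_R(S, J^3) is exact, then the 0-th Bass number μ_0(𝔪, J^2) = 0. -/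

import Mathlib

open CategoryTheory Limits MonoidalCategory

noncomputable section

set_option maxHeartbeats 1000000
set_option synthInstance.maxHeartbeats 1000000

namespace FrobeniusFlat

/-! ### Monoidal structure on `ℤ`-indexed cochain complexes of modules -/

section MonoidalInstances

variable (R : Type) [CommRing R]

instance (X : ModuleCat R) :
    PreservesColimitsOfSize.{0, 0} ((curriedTensor (ModuleCat R)).obj X) :=
  inferInstanceAs (PreservesColimitsOfSize.{0, 0} (tensorLeft X))

instance (X : ModuleCat R) :
    PreservesColimitsOfSize.{0, 0} ((curriedTensor (ModuleCat R)).flip.obj X) :=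
  preservesColimits_of_natIso
    (NatIso.ofComponents (fun Y => β_ X Y) (by intros; simp) :
      tensorLeft X ≅ (curriedTensor (ModuleCat R)).flip.obj X)

instance : (curriedTensor (ModuleCat R)).Additive where
  map_add := by
    intros
    ext Z : 2
    exact MonoidalPreadditive.add_whiskerRight ..

instance (X : ModuleCat R) : ((curriedTensor (ModuleCat R)).obj X).Additive :=
  inferInstanceAs (tensorLeft X).Additive

end MonoidalInstances

/-- `ℤ`-indexed cochain complexes of `R`-modules.  A homologically indexed complex
`M_*` is regarded as a cochain complex via `Mⁿ := M_{-n}`, so that the `i`-th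
homology `H_i` of a homologically indexed complex is `homology (-i)` of the
corresponding cochain complex. -/
abbrev Cx (R : Type) [CommRing R] := CochainComplex (ModuleCat R) ℤ

variable {R : Type} [CommRing R]

/-- A complex is acyclic if all of its homology vanishes. -/
def Acyclic (Z : Cx R) : Prop := ∀ i : ℤ, IsZero (Z.homology i)

/-- Two complexes are isomorphic in the derived category iff they are connected by a
roof of quasi-isomorphisms. -/
def DerivedIso (F M : Cx R) : Prop :=
  ∃ (Z : Cx R) (s : Z ⟶ F) (t : Z ⟶ M), QuasiIso s ∧ QuasiIso t

/-- A semi-flat (K-flat and degreewise flat) complex. -/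
def SemiFlat (F : Cx R) : Prop :=
  (∀ i : ℤ, Module.Flat R (F.X i)) ∧
    ∀ Z : Cx R, Acyclic Z → Acyclic (F ⊗ Z)

/-- A semi-projective (K-projective and degreewise projective) complex. -/
def SemiProjective (P : Cx R) : Prop :=
  (∀ i : ℤ, Projective (P.X i)) ∧
    ∀ Z : Cx R, Acyclic Z → ∀ g : P ⟶ Z, Nonempty (Homotopy g 0)

/-- A semi-injective (K-injective and degreewise injective) complex. -/
def SemiInjective (I : Cx R) : Prop :=
  (∀ i : ℤ, Injective (I.X i)) ∧
    ∀ Z : Cx R, Acyclic Z → ∀ g : Z ⟶ I, Nonempty (Homotopy g 0)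

/-- `fd_R M ≤ n` : there is a semi-flat resolution of `M` concentrated in
homological degrees `≤ n`, i.e. cohomological degrees `≥ -n`. -/
def FlatDimLE (M : Cx R) (n : ℤ) : Prop :=
  ∃ F : Cx R, SemiFlat F ∧ DerivedIso F M ∧ ∀ j : ℤ, j < -n → IsZero (F.X j)

/-- `M` has finite flat dimension. -/
def HasFiniteFlatDimension (M : Cx R) : Prop := ∃ n : ℤ, FlatDimLE M n

/-- `id_R M ≤ n` : there is a semi-injective resolution of `M` concentrated in
cohomological degrees `≤ n`. -/
def InjDimLE (M : Cx R) (n : ℤ) : Prop :=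
  ∃ I : Cx R, SemiInjective I ∧ DerivedIso M I ∧ ∀ j : ℤ, n < j → IsZero (I.X j)

/-- `M` has finite injective dimension. -/
def HasFiniteInjectiveDimension (M : Cx R) : Prop := ∃ n : ℤ, InjDimLE M n

/-- `H_*(M)` (homologically indexed) vanishes in all degrees `i ≥ t`; that is,
`t > sup H_*(M)`. -/
def SupHomologyLT (M : Cx R) (t : ℤ) : Prop :=
  ∀ i : ℤ, t ≤ i → IsZero (M.homology (-i))

/-- `H^*(M)` (cohomologically indexed) vanishes in all degrees `i ≥ t`; that is,
`t > sup H^*(M)`. -/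
def SupCohomologyLT (M : Cx R) (t : ℤ) : Prop :=
  ∀ i : ℤ, t ≤ i → IsZero (M.homology i)

/-- The homology `H_*(M)` of a homologically indexed complex is bounded above. -/
def HomologyBoundedAbove (M : Cx R) : Prop := ∃ t : ℤ, SupHomologyLT M t

/-- The cohomology `H^*(M)` of a cohomologically indexed complex is bounded above. -/
def CohomologyBoundedAbove (M : Cx R) : Prop := ∃ t : ℤ, SupCohomologyLT M t

/-- The `R`-module `ᵉR` : the ring `R` viewed as a module over itself via the `e`-th
iterate of the Frobenius endomorphism, so `r • s = r^(pᵉ) * s`. -/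
def frobModule (R : Type) [CommRing R] (p : ℕ) [Fact p.Prime] [CharP R p] (e : ℕ) :
    ModuleCat R :=
  (ModuleCat.restrictScalars (iterateFrobenius R p e)).obj (ModuleCat.of R R)

/-- `R` is F-finite : `ᵉR` is a finitely generated `R`-module (for `e = 1`,
equivalently for every `e`). -/
def FFinite (R : Type) [CommRing R] (p : ℕ) [Fact p.Prime] [CharP R p] : Prop :=
  Module.Finite R ↥(frobModule R p 1)

/-- A projective resolution of a module, embedded as a `ℤ`-indexed cochain complex
concentrated in cohomological degrees `≤ 0`.  This is a semi-flat and semi-projective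
complex quasi-isomorphic to the module. -/
def resolutionCx {N : ModuleCat R} (P : ProjectiveResolution N) : Cx R :=
  P.complex.extend ComplexShape.embeddingDownNat

/-- `Tor_i^R(N, M) = 0`, for a module `N` and a complex `M` : the homology in
homological degree `i` (cohomological degree `-i`) of `P ⊗_R M` vanishes, where `P`
is any projective resolution of `N`. -/
def TorVanishes (N : ModuleCat R) (M : Cx R) (i : ℤ) : Prop :=
  ∀ P : ProjectiveResolution N, IsZero ((resolutionCx P ⊗ M).homology (-i))

open CochainComplex.HomComplex in
/-- The `R`-module-valued Hom-complex `Hom_R(F, G)` of two complexes. -/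
def homCx (F G : Cx R) : Cx R where
  X i := ModuleCat.of R (Cochain F G i)
  d i j := ModuleCat.ofHom (δ_hom R F G i j)
  shape i j hij := ModuleCat.hom_ext (LinearMap.ext fun z => δ_shape i j hij z)
  d_comp_d' i j k _ _ := ModuleCat.hom_ext (LinearMap.ext fun z => δ_δ i j k z)

/-- `Ext^i_R(N, M) = 0`, for a module `N` and a complex `M` : the `i`-th cohomology of
`Hom_R(P, M)` vanishes, where `P` is any projective resolution of `N`. -/
def ExtVanishes (N : ModuleCat R) (M : Cx R) (i : ℤ) : Prop :=
  ∀ P : ProjectiveResolution N, IsZero ((homCx (resolutionCx P) M).homology i)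

/-- A module viewed as a complex concentrated in (co)homological degree `0`. -/
def singleCx (N : ModuleCat R) : Cx R :=
  (HomologicalComplex.single (ModuleCat R) (ComplexShape.up ℤ) 0).obj N

/-- Base change of a complex along a ring homomorphism `f : R →+* S`,
i.e. `M ⊗_R S` as a complex of `S`-modules. -/
def extendCx {R S : Type} [CommRing R] [CommRing S] (f : R →+* S) (M : Cx R) : Cx S :=
  ((ModuleCat.extendScalars f).mapHomologicalComplex (ComplexShape.up ℤ)).obj M

/-- Restriction of scalars of a complex along a ring homomorphism `f : R →+* S`. -/
def restrictCx {R S : Type} [CommRing R] [CommRing S] (f : R →+* S) (M : Cx S) : Cx R :=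
  ((ModuleCat.restrictScalars f).mapHomologicalComplex (ComplexShape.up ℤ)).obj M

/-- `T` is (a model of) `Tor_i^R(L, M)` for complexes `L`, `M` : it is the homology in
homological degree `i` of `F ⊗_R M` for some semi-flat resolution `F` of `L`. -/
def IsTorOf (L M : Cx R) (i : ℤ) (T : ModuleCat R) : Prop :=
  ∃ F : Cx R, SemiFlat F ∧ DerivedIso F L ∧ Nonempty (T ≅ (F ⊗ M).homology (-i))

/-- `E` is (a model of) `Ext^i_R(L, M)` for complexes `L`, `M` : it is the `i`-th
cohomology of `Hom_R(P, M)` for some semi-projective resolution `P` of `L`. -/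
def IsExtOf (L M : Cx R) (i : ℤ) (E : ModuleCat R) : Prop :=
  ∃ P : Cx R, SemiProjective P ∧ DerivedIso P L ∧ Nonempty (E ≅ (homCx P M).homology i)

/-- `T` is (a model of) `Tor_i^A(M, N)`, with its natural module structure over the
ring `C` of the second argument : for an `A`-complex `M` and a `C`-complex `N`
(restricted to `A` along `f : A →+* C`), it is the homology in homological degree `i`
of `N ⊗_C (C ⊗_A F) ≅ N ⊗_A F` for some semi-flat resolution `F` of `M` over `A`. -/
def IsTorMixed {A C : Type} [CommRing A] [CommRing C] (f : A →+* C)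
    (M : Cx A) (N : Cx C) (i : ℤ) (T : ModuleCat C) : Prop :=
  ∃ F : Cx A, SemiFlat F ∧ DerivedIso F M ∧
    Nonempty (T ≅ (N ⊗ extendCx f F).homology (-i))

/-- `T` is (a model of) `Tor_i^R(M, ᵉR)`, with its natural `ᵉR`-module structure :
it is the homology in homological degree `i` of `ᵉR ⊗_R F` (extension of scalars of
`F` along `fᵉ : R → ᵉR`, which is the `e`-th Frobenius iterate on the underlying
ring `R` of `ᵉR`) for some semi-flat resolution `F` of `M`. -/
def IsTorFrobTwisted (R : Type) [CommRing R] (p : ℕ) [Fact p.Prime] [CharP R p] (e : ℕ)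
    (M : Cx R) (i : ℤ) (T : ModuleCat R) : Prop :=
  ∃ F : Cx R, SemiFlat F ∧ DerivedIso F M ∧
    Nonempty (T ≅ (extendCx (iterateFrobenius R p e) F).homology (-i))

/-- `E` is (a model of) `Ext^i_R(ᵉR, M)`, with its natural `ᵉR`-module structure :
it is the `i`-th cohomology of `Hom_R(ᵉR, J)` (coextension of scalars of `J` along
`fᵉ : R → ᵉR`) for some semi-injective resolution `J` of `M`. -/
def IsExtFrobTwisted (R : Type) [CommRing R] (p : ℕ) [Fact p.Prime] [CharP R p] (e : ℕ)
    (M : Cx R) (i : ℤ) (E : ModuleCat R) : Prop :=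
  ∃ J : Cx R, SemiInjective J ∧ DerivedIso M J ∧
    Nonempty (E ≅ (((ModuleCat.coextendScalars (iterateFrobenius R p e)).mapHomologicalComplex
      (ComplexShape.up ℤ)).obj J).homology i)

open IsLocalRing

/-- A Noetherian local ring is Cohen–Macaulay if there is a regular sequence in the
maximal ideal whose length equals the Krull dimension of the ring. -/
def IsCohenMacaulayLocalRing (R : Type) [CommRing R] [IsLocalRing R] : Prop :=
  ∃ rs : List R, (∀ x ∈ rs, x ∈ maximalIdeal R) ∧
    RingTheory.Sequence.IsRegular R rs ∧ (rs.length : WithBot ℕ∞) = ringKrullDim R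

/-- The length `λ(M)` of a module, as the Krull dimension of its submodule lattice. -/
def length (R : Type) [CommRing R] (M : Type) [AddCommGroup M] [Module R M] :
    WithBot ℕ∞ :=
  Order.krullDim (Submodule R M)

/-- Interpret a length as a real number (with junk value `0` at `±∞`). -/
def lengthToReal (x : WithBot ℕ∞) : ℝ := ((x.unbotD 0).toNat : ℝ)

/-- The Hilbert–Samuel multiplicity `e(R)` of a `d`-dimensional local ring `R` with
respect to its maximal ideal, as the limit of `d! · λ(R/𝔪ⁿ)/nᵈ`. -/
def hilbertSamuelMultiplicity (R : Type) [CommRing R] [IsLocalRing R] (d : ℕ) : ℝ :=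
  Filter.limUnder Filter.atTop fun n : ℕ =>
    (d.factorial : ℝ) * lengthToReal (length R (R ⧸ (maximalIdeal R ^ n))) / (n : ℝ) ^ d

/-- A regular local ring : a Noetherian local ring whose maximal ideal is generated
by `dim R` elements. -/
def IsRegularLocalRing (Q : Type) [CommRing Q] [IsLocalRing Q] : Prop :=
  IsNoetherianRing Q ∧
    ∃ s : Finset Q, Ideal.span (s : Set Q) = maximalIdeal Q ∧
      (s.card : WithBot ℕ∞) = ringKrullDim Q

/-- A presentation of the `𝔪`-adic completion of `R` as a quotient of a complete
regular local ring by a regular sequence. -/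
structure CompleteIntersectionPresentation (R : Type) [CommRing R] [IsLocalRing R] where
  /-- the complete regular local ring -/
  Q : Type
  [commRing : CommRing Q]
  [localRing : IsLocalRing Q]
  regular : IsRegularLocalRing Q
  complete : IsAdicComplete (maximalIdeal Q) Q
  /-- the regular sequence -/
  rs : List Q
  mem_max : ∀ x ∈ rs, x ∈ maximalIdeal Q
  isRegSeq : RingTheory.Sequence.IsRegular Q rs
  /-- the presentation of the completion of `R` -/
  equiv : AdicCompletion (maximalIdeal R) R ≃+* (Q ⧸ Ideal.span {x | x ∈ rs})

/-- `R` is a local complete intersection : its `𝔪`-adic completion is the quotient of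
a complete regular local ring by a regular sequence. -/
def IsCompleteIntersectionLocalRing (R : Type) [CommRing R] [IsLocalRing R] : Prop :=
  Nonempty (CompleteIntersectionPresentation R)

end FrobeniusFlat

/-!
Choose `s` in the socle of `S` outside `𝔫^ℓ`. Since `𝔪S ⊆ 𝔫^ℓ`, the class of `s` in `S/𝔪S` has
annihilator exactly `𝔪`, so by injectivity of `J²` any socle element `x` of `J²` is `g s` for some
`g : S → J²` killing `𝔪S`. Such a `g` lands in the socle, hence `τ ∘ g = 0` and `g = σ ∘ h`. As
`𝔪 s = 0`, `h s` lies in the socle of `J¹`, so `x = σ (h s) = 0`.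
-/

open IsLocalRing

universe u

theorem Module.Injective.exists_linearMap_apply_eq {R M J : Type u} [CommRing R]
    [AddCommGroup M] [Module R M] [AddCommGroup J] [Module R J] [Module.Injective R J]
    {m : M} {x : J} (h : ∀ r : R, r • m = 0 → r • x = 0) :
    ∃ g : M →ₗ[R] J, g m = x := by
  let K := LinearMap.ker (LinearMap.toSpanSingleton R M m)
  have hK : K ≤ LinearMap.ker (LinearMap.toSpanSingleton R J x) := h
  obtain ⟨g, hg⟩ := Module.Injective.out (K.liftQ _ le_rfl)
    (LinearMap.ker_eq_bot.mp (K.ker_liftQ_eq_bot _ _ le_rfl)) (K.liftQ _ hK)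
  refine ⟨g, ?_⟩
  simpa only [Submodule.liftQ_apply, LinearMap.toSpanSingleton_apply, one_smul]
    using hg (Submodule.Quotient.mk 1)

theorem exists_linearMap_apply_eq_of_notMem_smul_top {R M J : Type u} [CommRing R]
    [IsLocalRing R] [AddCommGroup M] [Module R M] [AddCommGroup J] [Module R J]
    [Module.Injective R J] {m : M} (hm : m ∉ maximalIdeal R • (⊤ : Submodule R M)) {x : J}
    (hx : ∀ r ∈ maximalIdeal R, r • x = 0) :
    ∃ g : M →ₗ[R] J, g m = x ∧ ∀ y, ∀ r ∈ maximalIdeal R, r • g y = 0 := by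
  set N := maximalIdeal R • (⊤ : Submodule R M)
  have hann : ∀ r : R, r • N.mkQ m = 0 → r • x = 0 := by
    intro r hr
    by_cases hrm : r ∈ maximalIdeal R
    · exact hx r hrm
    · have hrN : r • m ∈ N := (Submodule.Quotient.mk_eq_zero N).mp hr
      exact (hm ((N.smul_mem_iff_of_isUnit (notMem_maximalIdeal.mp hrm)).mp hrN)).elim
  obtain ⟨g, hg⟩ := Module.Injective.exists_linearMap_apply_eq hann
  refine ⟨g ∘ₗ N.mkQ, hg, fun y r hr => ?_⟩
  rw [← map_smul, LinearMap.comp_apply, N.mkQ_apply,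
    (Submodule.Quotient.mk_eq_zero N).mpr (Submodule.smul_mem_smul hr Submodule.mem_top), map_zero]

theorem smul_eq_zero_of_mem_colon_maximalIdeal {R S : Type*} [CommRing R] [CommRing S]
    [IsLocalRing R] [IsLocalRing S] [Algebra R S] [IsLocalHom (algebraMap R S)] {s : S}
    (hs : s ∈ (⊥ : Submodule S S).colon (maximalIdeal S)) {r : R} (hr : r ∈ maximalIdeal R) :
    r • s = 0 := by
  rw [Algebra.smul_def, mul_comm, ← smul_eq_mul, ← Submodule.mem_bot S]
  exact Submodule.mem_colon.mp hs _ (map_nonunit (algebraMap R S) r hr)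

namespace FrobeniusFlat

theorem bass_number_zero_of_hom_exact_general
    (R S : Type) [CommRing R] [CommRing S]
    [IsLocalRing R] [IsLocalRing S]
    [Algebra R S] [IsLocalHom (algebraMap R S)]
    (l : ℕ)
    (hl : ¬ ((((⊥ : Submodule S S).colon (IsLocalRing.maximalIdeal S)) : Ideal S)
      ≤ IsLocalRing.maximalIdeal S ^ l))
    (hmS : (IsLocalRing.maximalIdeal R).map (algebraMap R S)
      ≤ IsLocalRing.maximalIdeal S ^ l)
    (J1 J2 J3 : Type) [AddCommGroup J1] [Module R J1] [AddCommGroup J2] [Module R J2]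
    [AddCommGroup J3] [Module R J3]
    (hJ2 : Module.Injective R J2)
    (sigma : J1 →ₗ[R] J2) (tau : J2 →ₗ[R] J3)
    (hsigma : ∀ x : J1, (∀ r ∈ IsLocalRing.maximalIdeal R, r • x = 0) → sigma x = 0)
    (htau : ∀ x : J2, (∀ r ∈ IsLocalRing.maximalIdeal R, r • x = 0) → tau x = 0)
    (hexact : ∀ g : S →ₗ[R] J2, tau.comp g = 0 ↔ ∃ h : S →ₗ[R] J1, sigma.comp h = g) :
    ∀ x : J2, (∀ r ∈ IsLocalRing.maximalIdeal R, r • x = 0) → x = 0 := by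
  intro x hx
  obtain ⟨s, hs_socle, hs_notMem⟩ := SetLike.not_le_iff_exists.mp hl
  have hs : s ∉ maximalIdeal R • (⊤ : Submodule R S) := by
    rw [Ideal.smul_top_eq_map]
    exact fun hmem => hs_notMem (hmS hmem)
  obtain ⟨g, rfl, hg_socle⟩ := exists_linearMap_apply_eq_of_notMem_smul_top hs hx
  obtain ⟨h, rfl⟩ := (hexact g).mp (LinearMap.ext fun y => htau _ (hg_socle y))
  refine hsigma (h s) fun r hr => ?_
  rw [← map_smul, smul_eq_zero_of_mem_colon_maximalIdeal hs_socle hr, map_zero]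

/-- Lemma 4.4.
Let `φ : (R, 𝔪) → (S, 𝔫)` be a local homomorphism of commutative Noetherian local
rings such that `S` is a finitely generated `R`-module and `depth S = 0` (i.e., the
socle `(0 :_S 𝔫)` is nonzero).  Let `ℓ` be an integer such that `(0 :_S 𝔫)` is not
contained in `𝔫^ℓ`, and suppose `𝔪S ⊆ 𝔫^ℓ`.  Let `J¹ → J² → J³` (maps `σ`, `τ`) be a
sequence of homomorphisms of injective `R`-modules such that the induced maps
`Hom_R(R/𝔪, σ)` and `Hom_R(R/𝔪, τ)` are both zero (i.e., `σ` and `τ` vanish on the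
socles).  If the induced sequence `Hom_R(S, J¹) → Hom_R(S, J²) → Hom_R(S, J³)` is
exact, then the `0`-th Bass number `μ_0(𝔪, J²) = 0` (i.e., the socle of `J²` is
zero). -/
theorem bass_number_zero_of_hom_exact
    (R S : Type) [CommRing R] [CommRing S]
    [IsNoetherianRing R] [IsNoetherianRing S]
    [IsLocalRing R] [IsLocalRing S]
    [Algebra R S] [IsLocalHom (algebraMap R S)] [Module.Finite R S]
    (hdepth : (⊥ : Submodule S S).colon (IsLocalRing.maximalIdeal S) ≠ ⊥)
    (l : ℕ)
    (hl : ¬ ((((⊥ : Submodule S S).colon (IsLocalRing.maximalIdeal S)) : Ideal S)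
      ≤ IsLocalRing.maximalIdeal S ^ l))
    (hmS : (IsLocalRing.maximalIdeal R).map (algebraMap R S)
      ≤ IsLocalRing.maximalIdeal S ^ l)
    (J1 J2 J3 : Type) [AddCommGroup J1] [Module R J1] [AddCommGroup J2] [Module R J2]
    [AddCommGroup J3] [Module R J3]
    (hJ1 : Module.Injective R J1) (hJ2 : Module.Injective R J2)
    (hJ3 : Module.Injective R J3)
    (sigma : J1 →ₗ[R] J2) (tau : J2 →ₗ[R] J3)
    (hsigma : ∀ x : J1, (∀ r ∈ IsLocalRing.maximalIdeal R, r • x = 0) → sigma x = 0)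
    (htau : ∀ x : J2, (∀ r ∈ IsLocalRing.maximalIdeal R, r • x = 0) → tau x = 0)
    (hexact : ∀ g : S →ₗ[R] J2, tau.comp g = 0 ↔ ∃ h : S →ₗ[R] J1, sigma.comp h = g) :
    ∀ x : J2, (∀ r ∈ IsLocalRing.maximalIdeal R, r • x = 0) → x = 0 :=
  bass_number_zero_of_hom_exact_general R S l hl hmS J1 J2 J3 hJ2 sigma tau hsigma htau hexact

end FrobeniusFlat

end
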